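/- For every k and every j with j ≤ k, the (k+1+j)-th iterate of the step function on init_k equals the configuration (Q2, tape_{k-j}, k-j); that is, during its leftward sweep the machine M stays in state Q2, replaces the 1s by 0s one per step from right to left, and moves its head leftward one cell per step. -/

import Mathlib

/-- Configurations of the 3-state Turing machine: (state, tape, head position). -/
abbrev Config : Type := Fin 3 × (ℕ → Bool) × ℕ

/-- The total step function of the machine M. State 0 = Q1, 1 = Q2, 2 = Q3 (halt). -/
def step (c : Config) : Config :=
  match c with
  | (q, T, p) =>
    if q = 0 then (if T p then (0, T, p + 1) else (1, T, p - 1))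
    else if q = 1 then
      (if T p then (1, Function.update T p false, p - 1) else (2, T, p + 1))
    else (2, T, p)

/-- The input tape 0 1^k 0 0 ⋯ : cell i holds 1 iff 1 ≤ i ≤ k. -/
def tape (k : ℕ) : ℕ → Bool := fun i => decide (1 ≤ i ∧ i ≤ k)

/-- Initial configuration on input 0 1^k: state Q1, scanning cell 1. -/
def init (k : ℕ) : Config := (0, tape k, 1)

/-!
The machine first runs right across the block of ones in state Q1, then on the blank
cell `k + 1` turns into Q2 with its head on cell `k`, the last one. From there each Q2
step on the tape `0 1^m` erases the rightmost one and moves left, leaving exactly the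
configuration `(Q2, tape (m - 1), m - 1)`, so the sweep is an induction on `j`.
-/

lemma step_zero_of_true {T : ℕ → Bool} {p : ℕ} (h : T p = true) :
    step (0, T, p) = (0, T, p + 1) := by
  simp [step, h]

lemma step_zero_of_false {T : ℕ → Bool} {p : ℕ} (h : T p = false) :
    step (0, T, p) = (1, T, p - 1) := by
  simp [step, h]

lemma step_one_of_true {T : ℕ → Bool} {p : ℕ} (h : T p = true) :
    step (1, T, p) = (1, Function.update T p false, p - 1) := by
  simp [step, h]

lemma iterate_step_zero_of_forall_true {T : ℕ → Bool} {p n : ℕ}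
    (h : ∀ i < n, T (p + i) = true) : step^[n] (0, T, p) = (0, T, p + n) := by
  induction n with
  | zero => rfl
  | succ n ih =>
    rw [Function.iterate_succ_apply', ih fun i hi => h i (by omega),
      step_zero_of_true (h n n.lt_succ_self), Nat.add_assoc]

lemma iterate_step_init (k : ℕ) : step^[k + 1] (init k) = (1, tape k, k) := by
  have hones : ∀ i < k, tape k (1 + i) = true := fun i hi => by simp [tape]; omega
  have hblank : tape k (1 + k) = false := by simp [tape]
  rw [Function.iterate_succ_apply', init, iterate_step_zero_of_forall_true hones,
    step_zero_of_false hblank, Nat.add_sub_cancel_left]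

lemma update_tape_succ (m : ℕ) : Function.update (tape (m + 1)) (m + 1) false = tape m := by
  funext i
  rcases eq_or_ne i (m + 1) with rfl | hi
  · simp [tape]
  · simp only [Function.update_of_ne hi, tape, decide_eq_decide]
    omega

lemma step_one_tape_succ (m : ℕ) : step (1, tape (m + 1), m + 1) = (1, tape m, m) := by
  rw [step_one_of_true (by simp [tape]), update_tape_succ, Nat.add_sub_cancel]

lemma iterate_step_one_tape_add (m j : ℕ) :
    step^[j] (1, tape (m + j), m + j) = (1, tape m, m) := by
  induction j with
  | zero => rfl
  | succ j ih => rw [Function.iterate_succ_apply, ← Nat.add_assoc, step_one_tape_succ, ih]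

/-- During its leftward sweep, M stays in state Q2, replaces the 1s by 0s one per
step from right to left, and moves its head leftward one cell per step. -/
theorem leftward_sweep (k j : ℕ) (hj : j ≤ k) :
    step^[k + 1 + j] (init k) = (1, tape (k - j), k - j) := by
  obtain ⟨m, rfl⟩ : ∃ m, k = m + j := ⟨k - j, by omega⟩
  rw [Nat.add_comm _ j, Function.iterate_add_apply, iterate_step_init,
    iterate_step_one_tape_add, Nat.add_sub_cancel]
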